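/- Let $C_{MZ} > 0$, let $c_0 = \frac{7}{12} - \frac{17}{6\pi^2}$, $c_1 = \frac{1}{3} - \frac{5}{6\pi^2}$, $c_2 = \frac{1}{12} + \frac{1}{6\pi^2}$, and let $V_{g,n}$ (for integers $g \ge 1$ and $n \in \{0,1,2\}$) be positive reals satisfying: (H1) for each $n \in \{0,1,2\}$, as $g \to \infty$, $V_{g,n} = C_{MZ}\,F(g,n)\left(1 + \frac{c_n}{g} + O\left(\frac{1}{g^2}\right)\right)$; (H2) there exist constants $0 < a \le A$ with $a\,F(g,n) \le V_{g,n} \le A\,F(g,n)$ for all $g \ge 2$ and $n \in \{0,1\}$. Define, for $g \ge 4$, $E_g := \frac{1}{2}\frac{V_{g-1,2}}{V_{g,0}} + \frac{1}{48}\frac{V_{g-1,1}}{V_{g,0}} + \sum_{j=2}^{\lfloor (g-1)/2 \rfloor} \frac{V_{j,1}V_{g-j,1}}{V_{g,0}} + \frac{1}{2}\frac{(V_{g/2,1})^2}{V_{g,0}}$, with the convention $V_{g/2,1} := 0$ if $g$ is odd. Then, as $g \to \infty$, $\frac{1}{4\pi}E_g = \frac{\pi}{12}\cdot\frac{1}{g}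 + \left(\frac{1}{4\pi} + \frac{\pi}{12}\right)\frac{1}{g^2} + O\left(\frac{1}{g^3}\right)$. -/

import Mathlib

/-- The Mirzakhani-Zograf main term
`F(g,n) = (3g-3+n)! (2g-3+n)! 2^(g-3+n) / (π^(2g) √g)`. -/
noncomputable def F (g n : ℕ) : ℝ :=
  (Nat.factorial (3 * g + n - 3) : ℝ) * (Nat.factorial (2 * g + n - 3) : ℝ) *
    (2 : ℝ) ^ ((g : ℤ) + (n : ℤ) - 3) / (Real.pi ^ (2 * g) * Real.sqrt (g : ℝ))

/-! The leading term of `E_g` is `(1/2) V_{g-1,2} / V_{g,0}`. Dividing (H1) by the exact ratio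
`F(g-1,2) / F(g,0) = (2π²/3g) (g/(g-1))^{3/2}` writes it as `(π²/3g) P_g` with
`P_g = 1 + (1 + 3/π²)/g + O(1/g²)`: first-order coefficients add under products, halve under
square roots and change sign under inversion. All other terms are `O(1/g³)`: by (H2) and
`V_{g,0} ≥ a F(g,0)` it suffices that their `F`-analogues are `O(F(g,0)/g³)`, which holds since
`F(g-1,1) = O(F(g,0)/g³)` and, by comparing factorials, `F(j,1) F(k,1) ≤ F(j+k,0)/(j+k)⁴`. -/

open Filter Asymptotics Topology Nat Real

theorem F_nonneg (g n : ℕ) : 0 ≤ F g n := by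
  unfold F; positivity

theorem F_pos {g : ℕ} (hg : 1 ≤ g) (n : ℕ) : 0 < F g n := by
  have : 0 < √(g : ℝ) := Real.sqrt_pos.2 (by exact_mod_cast hg)
  unfold F; positivity

theorem F_succ_left_mul {g : ℕ} (hg : 1 ≤ g) (n : ℕ) :
    F (g + 1) n * (2 * π ^ 2 * √((g : ℝ) + 1)) = (3 * g + n) * F g (n + 2) * √g := by
  have hfac : ((3 * (g + 1) + n - 3)! : ℝ) = (3 * g + n) * (3 * g + (n + 2) - 3)! := by
    rw [show 3 * (g + 1) + n - 3 = 3 * g + n by omega,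
      show 3 * g + (n + 2) - 3 = 3 * g + n - 1 by omega, ← Nat.mul_factorial_pred (by omega)]
    push_cast; ring
  have hzpow :
      (2 : ℝ) ^ (((g + 1 : ℕ) : ℤ) + n - 3) * 2 =
        2 ^ ((g : ℤ) + ((n + 2 : ℕ) : ℤ) - 3) := by
    rw [← zpow_add_one₀ two_ne_zero]; push_cast; ring_nf
  have hsq : 0 < √(g : ℝ) := Real.sqrt_pos.2 (by exact_mod_cast hg)
  unfold F
  rw [hfac, ← hzpow, show 2 * (g + 1) + n - 3 = 2 * g + (n + 2) - 3 by omega,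
    show 2 * (g + 1) = 2 * g + 2 by ring, pow_add]
  push_cast
  field_simp

theorem F_succ_right {g n : ℕ} (h : 3 ≤ 2 * g + n) :
    F g (n + 1) = 2 * ((3 * g + n : ℝ) - 2) * ((2 * g + n : ℝ) - 2) * F g n := by
  have h3 : ((3 * g + (n + 1) - 3)! : ℝ) = ((3 * g + n : ℝ) - 2) * (3 * g + n - 3)! := by
    rw [show 3 * g + (n + 1) - 3 = 3 * g + n - 2 by omega,
      show 3 * g + n - 3 = 3 * g + n - 2 - 1 by omega, ← Nat.mul_factorial_pred (by omega)]
    push_cast [show 2 ≤ 3 * g + n by omega]; ring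
  have h2 : ((2 * g + (n + 1) - 3)! : ℝ) = ((2 * g + n : ℝ) - 2) * (2 * g + n - 3)! := by
    rw [show 2 * g + (n + 1) - 3 = 2 * g + n - 2 by omega,
      show 2 * g + n - 3 = 2 * g + n - 2 - 1 by omega, ← Nat.mul_factorial_pred (by omega)]
    push_cast [show 2 ≤ 2 * g + n by omega]; ring
  have hzpow :
      (2 : ℝ) ^ ((g : ℤ) + ((n + 1 : ℕ) : ℤ) - 3) =
        2 * 2 ^ ((g : ℤ) + (n : ℤ) - 3) := by
    rw [mul_comm, ← zpow_add_one₀ two_ne_zero]; push_cast; ring_nf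
  unfold F
  rw [h3, h2, hzpow]
  ring

theorem F_pred_two {g : ℕ} (hg : 2 ≤ g) :
    F (g - 1) 2 = F g 0 * (2 * π ^ 2 / (3 * g)) *
      ((1 + 1 / ((g - 1 : ℕ) : ℝ)) * √(1 + 1 / ((g - 1 : ℕ) : ℝ))) := by
  obtain ⟨h, rfl⟩ : ∃ h, g = h + 1 := ⟨g - 1, by omega⟩
  have hh : (0 : ℝ) < h := by exact_mod_cast (show 0 < h by omega)
  have hrec := F_succ_left_mul (show 1 ≤ h by omega) 0
  rw [Nat.add_sub_cancel, show (1 : ℝ) + 1 / h = (h + 1) / h by field_simp,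
    Real.sqrt_div (by positivity)]
  have : 0 < √(h : ℝ) := Real.sqrt_pos.2 hh
  push_cast at hrec ⊢
  field_simp
  linear_combination -hrec

theorem F_pred_two_le {g : ℕ} (hg : 2 ≤ g) : F (g - 1) 2 ≤ 3 * π ^ 2 * (F g 0 / g) := by
  set t : ℝ := 1 + 1 / ((g - 1 : ℕ) : ℝ)
  have ht : t ≤ 2 := by
    have : (1 : ℝ) ≤ ((g - 1 : ℕ) : ℝ) := by exact_mod_cast (show 1 ≤ g - 1 by omega)
    have : 1 / ((g - 1 : ℕ) : ℝ) ≤ 1 := by rwa [div_le_one (by linarith)]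
    linarith
  have hst : √t ≤ 2 := (Real.sqrt_le_left zero_le_two).2 (by linarith)
  have hF := F_nonneg g 0
  rw [F_pred_two hg]
  calc F g 0 * (2 * π ^ 2 / (3 * g)) * (t * √t)
      ≤ F g 0 * (2 * π ^ 2 / (3 * g)) * (2 * 2) := by gcongr
    _ = 8 / 3 * π ^ 2 * (F g 0 / g) := by ring
    _ ≤ 3 * π ^ 2 * (F g 0 / g) := by gcongr; norm_num

theorem F_pred_one_le {g : ℕ} (hg : 2 ≤ g) : F (g - 1) 1 ≤ 3 * π ^ 2 * (F g 0 / g ^ 3) := by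
  have hrec := F_succ_right (g := g - 1) (n := 1) (by omega)
  have hF := F_nonneg (g - 1) 1
  have hcast : ((g - 1 : ℕ) : ℝ) = g - 1 := by push_cast [show 1 ≤ g by omega]; ring
  have hg' : (2 : ℝ) ≤ g := by exact_mod_cast hg
  have hsq : (g : ℝ) ^ 2 * F (g - 1) 1 ≤ F (g - 1) 2 := by
    rw [hrec, hcast]; push_cast
    have : (g : ℝ) ^ 2 ≤ 2 * (3 * (g - 1) + 1 - 2) * (2 * (g - 1) + 1 - 2) := by nlinarith
    exact mul_le_mul_of_nonneg_right this hF
  calc F (g - 1) 1 ≤ F (g - 1) 2 / g ^ 2 := by rw [le_div_iff₀ (by positivity)]; linarith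
    _ ≤ 3 * π ^ 2 * (F g 0 / g) / g ^ 2 := by gcongr; exact F_pred_two_le hg
    _ = 3 * π ^ 2 * (F g 0 / g ^ 3) := by ring

theorem factorial_add_mul_factorial_le {k b : ℕ} (hkb : k ≤ b) (d : ℕ) :
    (k + d)! * b ! ≤ k ! * (d + b)! := by
  induction d with
  | zero => simp
  | succ d ih =>
    calc (k + (d + 1))! * b ! = (k + d + 1) * ((k + d)! * b !) := by
          rw [← add_assoc, factorial_succ]; ring
      _ ≤ (d + b + 1) * (k ! * (d + b)!) := Nat.mul_le_mul (by omega) ih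
      _ = k ! * (d + 1 + b)! := by rw [show d + 1 + b = d + b + 1 by omega, factorial_succ]; ring

theorem factorial_mul_factorial_le {k a b : ℕ} (ha : k ≤ a) (hb : k ≤ b) :
    a ! * b ! ≤ k ! * (a + b - k)! := by
  obtain ⟨d, rfl⟩ := Nat.exists_eq_add_of_le ha
  rw [show k + d + b - k = d + b by omega]
  exact factorial_add_mul_factorial_le hb d

theorem factorial_mul_factorial_mul_pow_le {j k : ℕ} (hj : 2 ≤ j) (hk : 2 ≤ k)
    (hjk : 5 ≤ j + k) :
    (3 * j - 2)! * (2 * j - 2)! * ((3 * k - 2)! * (2 * k - 2)!) * (j + k) ^ 4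
      ≤ (3 * (j + k) - 3)! * (2 * (j + k) - 3)! := by
  set g := j + k
  have h3 : (3 * j - 2)! * (3 * k - 2)! ≤ 4 ! * (3 * g - 8)! := by
    convert factorial_mul_factorial_le (k := 4) (a := 3 * j - 2) (b := 3 * k - 2)
      (by omega) (by omega) using 3
    omega
  have h2 : (2 * j - 2)! * (2 * k - 2)! ≤ 2 ! * (2 * g - 6)! := by
    convert factorial_mul_factorial_le (k := 2) (a := 2 * j - 2) (b := 2 * k - 2)
      (by omega) (by omega) using 3
    omega
  have h3' : (3 * g - 8)! * (3 * g - 8) ^ 5 ≤ (3 * g - 3)! := by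
    convert factorial_mul_pow_sub_le_factorial (by omega : 3 * g - 8 ≤ 3 * g - 3) using 3
    omega
  have h2' : (2 * g - 6)! * (2 * g - 6) ^ 3 ≤ (2 * g - 3)! := by
    convert factorial_mul_pow_sub_le_factorial (by omega : 2 * g - 6 ≤ 2 * g - 3) using 3
    omega
  have hpow : 4 ! * 2 ! * g ^ 4 ≤ (3 * g - 8) ^ 5 * (2 * g - 6) ^ 3 := by
    have hg : g ≤ 3 * g - 8 := by omega
    calc 4 ! * 2 ! * g ^ 4 ≤ ((3 * g - 8) * (2 * g - 6) ^ 3) * (3 * g - 8) ^ 4 := by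
          rw [show 4 ! * 2 ! = 48 from rfl]
          gcongr
          calc 48 ≤ 7 * 2 ^ 3 := by norm_num
            _ ≤ _ := by gcongr <;> omega
      _ = (3 * g - 8) ^ 5 * (2 * g - 6) ^ 3 := by ring
  calc (3 * j - 2)! * (2 * j - 2)! * ((3 * k - 2)! * (2 * k - 2)!) * g ^ 4
      = ((3 * j - 2)! * (3 * k - 2)!) * ((2 * j - 2)! * (2 * k - 2)!) * g ^ 4 := by ring
    _ ≤ (4 ! * (3 * g - 8)!) * (2 ! * (2 * g - 6)!) * g ^ 4 := by gcongr
    _ = (3 * g - 8)! * (2 * g - 6)! * (4 ! * 2 ! * g ^ 4) := by ring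
    _ ≤ (3 * g - 8)! * (2 * g - 6)! * ((3 * g - 8) ^ 5 * (2 * g - 6) ^ 3) := by gcongr
    _ = ((3 * g - 8)! * (3 * g - 8) ^ 5) * ((2 * g - 6)! * (2 * g - 6) ^ 3) := by ring
    _ ≤ (3 * g - 3)! * (2 * g - 3)! := by gcongr

theorem F_one_mul_F_one_le {j k : ℕ} (hj : 2 ≤ j) (hk : 2 ≤ k) (hjk : 5 ≤ j + k) :
    F j 1 * F k 1 ≤ F (j + k) 0 / ((j + k : ℕ) : ℝ) ^ 4 := by
  have hnat : ((3 * j - 2)! * (2 * j - 2)! * ((3 * k - 2)! * (2 * k - 2)!) : ℝ) *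
      ((j + k : ℕ) : ℝ) ^ 4 ≤ (3 * (j + k) - 3)! * (2 * (j + k) - 3)! := by
    exact_mod_cast factorial_mul_factorial_mul_pow_le hj hk hjk
  have hsqrt : √((j + k : ℕ) : ℝ) ≤ √(j : ℝ) * √(k : ℝ) := by
    rw [← Real.sqrt_mul (Nat.cast_nonneg j)]
    gcongr
    exact_mod_cast (show j + k ≤ j * k by nlinarith)
  have hzpow : (2 : ℝ) ^ (((j + k : ℕ) : ℤ) + ((0 : ℕ) : ℤ) - 3)
      = 2 * (2 ^ ((j : ℤ) + ((1 : ℕ) : ℤ) - 3) *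
          2 ^ ((k : ℤ) + ((1 : ℕ) : ℤ) - 3)) := by
    rw [← zpow_add₀ two_ne_zero, ← zpow_one_add₀ two_ne_zero]; push_cast; ring_nf
  have hj0 : 0 < √(j : ℝ) := Real.sqrt_pos.2 (by exact_mod_cast (show 0 < j by omega))
  have hk0 : 0 < √(k : ℝ) := Real.sqrt_pos.2 (by exact_mod_cast (show 0 < k by omega))
  unfold F
  rw [hzpow, show π ^ (2 * (j + k)) = π ^ (2 * j) * π ^ (2 * k) by rw [← pow_add]; ring_nf,
    show 3 * j + 1 - 3 = 3 * j - 2 by omega,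
    show 2 * j + 1 - 3 = 2 * j - 2 by omega, show 3 * k + 1 - 3 = 3 * k - 2 by omega,
    show 2 * k + 1 - 3 = 2 * k - 2 by omega, show 3 * (j + k) + 0 - 3 = 3 * (j + k) - 3 by omega,
    show 2 * (j + k) + 0 - 3 = 2 * (j + k) - 3 by omega, div_mul_div_comm (_ : ℝ), div_div,
    div_le_div_iff₀ (by positivity) (by positivity)]
  set P : ℝ := 2 ^ ((j : ℤ) + ((1 : ℕ) : ℤ) - 3) * 2 ^ ((k : ℤ) + ((1 : ℕ) : ℤ) - 3) *
    (π ^ (2 * j) * π ^ (2 * k))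
  have hP : 0 < P := by positivity
  calc _ = ((3 * j - 2)! * (2 * j - 2)! * ((3 * k - 2)! * (2 * k - 2)!) : ℝ) *
          ((j + k : ℕ) : ℝ) ^ 4 * √((j + k : ℕ) : ℝ) * P := by ring
    _ ≤ ((3 * (j + k) - 3)! * (2 * (j + k) - 3)! : ℝ) * (√(j : ℝ) * √(k : ℝ)) * P := by
        gcongr
    _ ≤ 2 * _ := le_mul_of_one_le_left (by positivity) one_le_two
    _ = _ := by ring

def HasExpansion (f : ℕ → ℝ) (c : ℝ) : Prop :=
  (fun g : ℕ => f g - (1 + c / g)) =O[atTop] fun g : ℕ => 1 / (g : ℝ) ^ 2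

theorem tendsto_one_div_sq_atTop_nhds_zero_nat :
    Tendsto (fun g : ℕ => 1 / (g : ℝ) ^ 2) atTop (𝓝 0) := by
  simpa using (tendsto_inv_atTop_nhds_zero_nat (𝕜 := ℝ)).pow 2

theorem tendsto_one_add_div_atTop_nhds_one_nat (c : ℝ) :
    Tendsto (fun g : ℕ => 1 + c / g) atTop (𝓝 1) := by
  simpa using (tendsto_const_div_atTop_nhds_zero_nat c).const_add 1

theorem isBigO_one_div_pred_sq :
    (fun g : ℕ => 1 / ((g - 1 : ℕ) : ℝ) ^ 2) =O[atTop] fun g : ℕ => 1 / (g : ℝ) ^ 2 := by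
  refine IsBigO.of_bound 4 ?_
  filter_upwards [eventually_ge_atTop 2] with g hg
  obtain ⟨h, rfl⟩ : ∃ h, g = h + 1 := ⟨g - 1, by omega⟩
  have hh : (1 : ℝ) ≤ h := by exact_mod_cast (show 1 ≤ h by omega)
  rw [Nat.add_sub_cancel, Real.norm_of_nonneg (by positivity),
    Real.norm_of_nonneg (by positivity), mul_one_div,
    div_le_div_iff₀ (by positivity) (by positivity)]
  push_cast
  nlinarith

theorem isBigO_one_div_pred_sub_one_div :
    (fun g : ℕ => 1 / ((g - 1 : ℕ) : ℝ) - 1 / g)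
      =O[atTop] fun g : ℕ => 1 / (g : ℝ) ^ 2 := by
  refine IsBigO.of_bound 2 ?_
  filter_upwards [eventually_ge_atTop 2] with g hg
  obtain ⟨h, rfl⟩ : ∃ h, g = h + 1 := ⟨g - 1, by omega⟩
  have hh : (1 : ℝ) ≤ h := by exact_mod_cast (show 1 ≤ h by omega)
  have e : 1 / (h : ℝ) - 1 / ((h + 1 : ℕ) : ℝ) = 1 / (h * (h + 1)) := by
    push_cast; field_simp; ring
  rw [Nat.add_sub_cancel, e, Real.norm_of_nonneg (by positivity),
    Real.norm_of_nonneg (by positivity), mul_one_div,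
    div_le_div_iff₀ (by positivity) (by positivity)]
  push_cast
  nlinarith

theorem hasExpansion_one_add_div (c : ℝ) : HasExpansion (fun g => 1 + c / g) c := by
  simpa [HasExpansion] using isBigO_zero _ _

namespace HasExpansion

variable {f h : ℕ → ℝ} {c d : ℝ}

theorem tendsto (hf : HasExpansion f c) : Tendsto f atTop (𝓝 1) := by
  simpa using (hf.trans_tendsto tendsto_one_div_sq_atTop_nhds_zero_nat).add
    (tendsto_one_add_div_atTop_nhds_one_nat c)

theorem isBigO_one (hf : HasExpansion f c) : f =O[atTop] fun _ => (1 : ℝ) :=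
  hf.tendsto.isBigO_one ℝ

theorem mul (hf : HasExpansion f c) (hh : HasExpansion h d) :
    HasExpansion (fun g => f g * h g) (c + d) := by
  have e : (fun g : ℕ => f g * h g - (1 + (c + d) / g)) = fun g =>
      (f g - (1 + c / g)) * h g + (1 + c / g) * (h g - (1 + d / g)) +
        c * d * (1 / (g : ℝ) ^ 2) := by
    funext g; ring
  rw [HasExpansion, e]
  refine ((?_ : _ =O[atTop] _).add ?_).add (isBigO_const_mul_self _ _ _)
  · simpa using IsBigO.mul hf hh.isBigO_one
  · simpa using IsBigO.mul (hasExpansion_one_add_div c).isBigO_one hh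

theorem inv (hf : HasExpansion f c) : HasExpansion (fun g => (f g)⁻¹) (-c) := by
  have hne : ∀ᶠ g in atTop, f g ≠ 0 := hf.tendsto.eventually_ne one_ne_zero
  have hrest : (fun g : ℕ => c ^ 2 * (1 / (g : ℝ) ^ 2) - (f g - (1 + c / g)) * (1 - c / g))
      =O[atTop] fun g : ℕ => 1 / (g : ℝ) ^ 2 := by
    refine (isBigO_const_mul_self _ _ _).sub ?_
    simpa [neg_div, ← sub_eq_add_neg] using
      IsBigO.mul hf (hasExpansion_one_add_div (-c)).isBigO_one
  refine ((hf.tendsto.inv₀ one_ne_zero).isBigO_one ℝ |>.mul hrest |>.congr' ?_ ?_)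
  · filter_upwards [hne] with g hg
    field_simp
    ring
  · simp

theorem comp_pred (hf : HasExpansion f c) : HasExpansion (fun g => f (g - 1)) c := by
  have e : (fun g : ℕ => f (g - 1) - (1 + c / g)) = fun g =>
      (f (g - 1) - (1 + c / ((g - 1 : ℕ) : ℝ))) + c * (1 / ((g - 1 : ℕ) : ℝ) - 1 / g) := by
    funext g; ring
  rw [HasExpansion, e]
  exact ((hf.comp_tendsto (tendsto_sub_atTop_nat 1)).trans isBigO_one_div_pred_sq).add
    (isBigO_one_div_pred_sub_one_div.const_mul_left c)

theorem sqrt (hf : HasExpansion f c) : HasExpansion (fun g => √(f g)) (c / 2) := by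
  have hden : Tendsto (fun g : ℕ => √(f g) + (1 + c / 2 / g)) atTop (𝓝 2) := by
    have := hf.tendsto.sqrt.add (tendsto_one_add_div_atTop_nhds_one_nat (c / 2))
    norm_num at this
    exact this
  have hnum : (fun g : ℕ => f g - (1 + c / 2 / g) ^ 2)
      =O[atTop] fun g : ℕ => 1 / (g : ℝ) ^ 2 := by
    have e : (fun g : ℕ => f g - (1 + c / 2 / g) ^ 2) = fun g : ℕ =>
        (f g - (1 + c / g)) - c ^ 2 / 4 * (1 / (g : ℝ) ^ 2) := by
      funext g; ring
    rw [e]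
    exact IsBigO.sub hf (isBigO_const_mul_self _ _ _)
  refine ((hden.inv₀ two_ne_zero).isBigO_one ℝ |>.mul hnum |>.congr' ?_ (by simp))
  filter_upwards [hf.tendsto.eventually_const_lt zero_lt_one, hden.eventually_ne two_ne_zero]
    with g hpos hne
  rw [inv_mul_eq_div, div_eq_iff hne]
  nth_rewrite 1 [← Real.sq_sqrt hpos.le]
  ring

theorem isBigO_const_div_mul_sub (hf : HasExpansion f c) (b : ℝ) :
    (fun g : ℕ => b / g * f g - (b / g + b * c / g ^ 2))
      =O[atTop] fun g : ℕ => 1 / (g : ℝ) ^ 3 :=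
  ((isBigO_const_mul_self b (fun g : ℕ => 1 / (g : ℝ)) atTop).mul hf).congr
    (fun g => by ring) (fun g => by ring)

end HasExpansion

theorem hasExpansion_div_of_abs_sub_le {W G : ℕ → ℝ} {κ c C : ℝ} (hκ : κ ≠ 0)
    (hG : ∀ᶠ g in atTop, 0 < G g)
    (h : ∀ᶠ g in atTop, |W g - κ * G g * (1 + c / g)| ≤ C * G g / (g : ℝ) ^ 2) :
    HasExpansion (fun g => W g / (κ * G g)) c := by
  refine IsBigO.of_bound (C / |κ|) ?_
  filter_upwards [hG, h] with g hG h
  have e : W g / (κ * G g) - (1 + c / g) = (W g - κ * G g * (1 + c / g)) / (κ * G g) := by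
    field_simp
  rw [e, Real.norm_eq_abs, abs_div, abs_mul, abs_of_pos hG, Real.norm_of_nonneg (by positivity),
    div_le_iff₀ (by positivity)]
  calc _ ≤ C * G g / (g : ℝ) ^ 2 := h
    _ = _ := by field_simp

theorem half_ratio_sub_isBigO {V : ℕ → ℕ → ℝ} {κ : ℝ} (hκ : κ ≠ 0)
    (h0 : HasExpansion (fun g => V g 0 / (κ * F g 0)) (7 / 12 - 17 / (6 * π ^ 2)))
    (h2 : HasExpansion (fun g => V g 2 / (κ * F g 2)) (1 / 12 + 1 / (6 * π ^ 2))) :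
    (fun g : ℕ => 1 / 2 * V (g - 1) 2 / V g 0 -
        (π ^ 2 / (3 * g) + (1 + π ^ 2 / 3) / (g : ℝ) ^ 2))
      =O[atTop] fun g : ℕ => 1 / (g : ℝ) ^ 3 := by
  have ht := (hasExpansion_one_add_div 1).comp_pred
  -- `1 + 1/2 + c₂ - c₀ = 1 + 3/π²` and `(π²/3) (1 + 3/π²) = 1 + π²/3`.
  refine (((ht.mul ht.sqrt).mul h2.comp_pred).mul h0.inv |>.isBigO_const_div_mul_sub (π ^ 2 / 3)
    |>.congr' ?_ EventuallyEq.rfl)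
  filter_upwards [eventually_ge_atTop 2] with g hg
  have hg0 : (0 : ℝ) < g := by exact_mod_cast (show 0 < g by omega)
  have ht0 : (0 : ℝ) < 1 + 1 / ((g - 1 : ℕ) : ℝ) := by positivity
  have hs0 : 0 < √(1 + 1 / ((g - 1 : ℕ) : ℝ)) := Real.sqrt_pos.2 ht0
  have hF := F_pos (show 1 ≤ g by omega) 0
  rw [F_pred_two hg]
  field_simp
  ring

theorem isBigO_div_of_mul_le {α : Type*} {l : Filter α} {N D G v : α → ℝ} {a : ℝ}
    (ha : 0 < a) (hG : ∀ᶠ x in l, 0 < G x) (hD : ∀ᶠ x in l, a * G x ≤ D x)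
    (hN : N =O[l] fun x => G x / v x) :
    (fun x => N x / D x) =O[l] fun x => 1 / v x := by
  have hDinv : (fun x => (D x)⁻¹) =O[l] fun x => (G x)⁻¹ := by
    refine IsBigO.of_bound a⁻¹ ?_
    filter_upwards [hG, hD] with x hG hD
    have hD0 : 0 < D x := lt_of_lt_of_le (by positivity) hD
    rw [Real.norm_of_nonneg (by positivity), Real.norm_of_nonneg (by positivity), ← mul_inv]
    exact inv_anti₀ (by positivity) hD
  refine (hN.mul hDinv).congr' (Eventually.of_forall fun x => (div_eq_mul_inv _ _).symm) ?_
  filter_upwards [hG] with x hG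
  field_simp

section Tails

variable {W : ℕ → ℝ} {A : ℝ}

theorem abs_mul_le_of_abs_le_F (hW : ∀ j, 2 ≤ j → |W j| ≤ A * F j 1) {j k : ℕ}
    (hj : 2 ≤ j) (hk : 2 ≤ k) (hjk : 5 ≤ j + k) :
    |W j * W k| ≤ A ^ 2 * (F (j + k) 0 / ((j + k : ℕ) : ℝ) ^ 4) := by
  calc |W j * W k| = |W j| * |W k| := abs_mul _ _
    _ ≤ (A * F j 1) * (A * F k 1) :=
        mul_le_mul (hW j hj) (hW k hk) (abs_nonneg _) ((abs_nonneg _).trans (hW j hj))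
    _ = A ^ 2 * (F j 1 * F k 1) := by ring
    _ ≤ A ^ 2 * (F (j + k) 0 / ((j + k : ℕ) : ℝ) ^ 4) := by
        gcongr; exact F_one_mul_F_one_le hj hk hjk

theorem isBigO_pred_of_abs_le_F (hW : ∀ j, 2 ≤ j → |W j| ≤ A * F j 1) :
    (fun g => W (g - 1)) =O[atTop] fun g : ℕ => F g 0 / (g : ℝ) ^ 3 := by
  have hA : 0 ≤ A :=
    nonneg_of_mul_nonneg_left ((abs_nonneg _).trans (hW 2 le_rfl)) (F_pos (by norm_num) 1)
  refine IsBigO.of_bound (A * (3 * π ^ 2)) ?_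
  filter_upwards [eventually_ge_atTop 3] with g hg
  rw [Real.norm_eq_abs, Real.norm_of_nonneg (div_nonneg (F_nonneg g 0) (by positivity))]
  calc |W (g - 1)| ≤ A * F (g - 1) 1 := hW _ (by omega)
    _ ≤ A * (3 * π ^ 2 * (F g 0 / g ^ 3)) := by gcongr; exact F_pred_one_le (by omega)
    _ = _ := by ring

theorem isBigO_sum_mul_of_abs_le_F (hW : ∀ j, 2 ≤ j → |W j| ≤ A * F j 1) :
    (fun g => ∑ j ∈ Finset.Icc 2 ((g - 1) / 2), W j * W (g - j))
      =O[atTop] fun g : ℕ => F g 0 / (g : ℝ) ^ 3 := by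
  refine IsBigO.of_bound (A ^ 2) ?_
  filter_upwards [eventually_ge_atTop 5] with g hg
  have hg0 : (0 : ℝ) < g := by exact_mod_cast (show 0 < g by omega)
  have hterm : ∀ j ∈ Finset.Icc 2 ((g - 1) / 2),
      |W j * W (g - j)| ≤ A ^ 2 * (F g 0 / (g : ℝ) ^ 4) := by
    intro j hj
    rw [Finset.mem_Icc] at hj
    have := abs_mul_le_of_abs_le_F hW hj.1 (show 2 ≤ g - j by omega) (by omega)
    rwa [show j + (g - j) = g by omega] at this
  have hcard : ((Finset.Icc 2 ((g - 1) / 2)).card : ℝ) ≤ g := by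
    exact_mod_cast (show (Finset.Icc 2 ((g - 1) / 2)).card ≤ g by rw [Nat.card_Icc]; omega)
  rw [Real.norm_eq_abs, Real.norm_of_nonneg (div_nonneg (F_nonneg g 0) (by positivity))]
  calc |∑ j ∈ Finset.Icc 2 ((g - 1) / 2), W j * W (g - j)|
      ≤ ∑ j ∈ Finset.Icc 2 ((g - 1) / 2), |W j * W (g - j)| := Finset.abs_sum_le_sum_abs _ _
    _ ≤ ∑ _j ∈ Finset.Icc 2 ((g - 1) / 2), A ^ 2 * (F g 0 / (g : ℝ) ^ 4) :=
        Finset.sum_le_sum hterm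
    _ = (Finset.Icc 2 ((g - 1) / 2)).card * (A ^ 2 * (F g 0 / (g : ℝ) ^ 4)) := by
        rw [Finset.sum_const, nsmul_eq_mul]
    _ ≤ g * (A ^ 2 * (F g 0 / (g : ℝ) ^ 4)) := by
        gcongr; exact mul_nonneg (sq_nonneg A) (div_nonneg (F_nonneg g 0) (by positivity))
    _ = A ^ 2 * (F g 0 / (g : ℝ) ^ 3) := by field_simp

theorem isBigO_even_sq_of_abs_le_F (hW : ∀ j, 2 ≤ j → |W j| ≤ A * F j 1) :
    (fun g => (if Even g then W (g / 2) else 0) ^ 2)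
      =O[atTop] fun g : ℕ => F g 0 / (g : ℝ) ^ 3 := by
  refine IsBigO.of_bound (A ^ 2) ?_
  filter_upwards [eventually_ge_atTop 5] with g hg
  have hg1 : (1 : ℝ) ≤ g := by exact_mod_cast (show 1 ≤ g by omega)
  rw [Real.norm_eq_abs, Real.norm_of_nonneg (div_nonneg (F_nonneg g 0) (by positivity))]
  split_ifs with he
  · obtain ⟨c, rfl⟩ := he
    rw [show (c + c) / 2 = c by omega, sq]
    calc |W c * W c| ≤ A ^ 2 * (F (c + c) 0 / ((c + c : ℕ) : ℝ) ^ 4) :=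
          abs_mul_le_of_abs_le_F hW (by omega) (by omega) hg
      _ ≤ A ^ 2 * (F (c + c) 0 / ((c + c : ℕ) : ℝ) ^ 3) := by
          have := F_nonneg (c + c) 0
          gcongr A ^ 2 * (_ / ?_)
          exact pow_le_pow_right₀ hg1 (by norm_num)
  · rw [sq, mul_zero, abs_zero]
    exact mul_nonneg (sq_nonneg A) (div_nonneg (F_nonneg g 0) (by positivity))

end Tails

theorem exists_pos_abs_le_div_cube_of_isBigO {f : ℕ → ℝ}
    (h : f =O[atTop] fun g : ℕ => 1 / (g : ℝ) ^ 3) :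
    ∃ C : ℝ, 0 < C ∧ ∃ g0 : ℕ, ∀ g : ℕ, g0 ≤ g → |f g| ≤ C / (g : ℝ) ^ 3 := by
  obtain ⟨C, hC, hw⟩ := h.exists_pos
  obtain ⟨g0, hg0⟩ := eventually_atTop.1 hw.bound
  refine ⟨C, hC, g0, fun g hg => ?_⟩
  simpa [div_eq_mul_inv] using hg0 g hg

theorem stmt_15_general (CMZ : ℝ) (hCMZ : 0 < CMZ) (V : ℕ → ℕ → ℝ)
    (h0 : ∃ C : ℝ, 0 < C ∧ ∃ g0 : ℕ, ∀ g : ℕ, g0 ≤ g →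
      |V g 0 - CMZ * F g 0 * (1 + (7 / 12 - 17 / (6 * Real.pi ^ 2)) / (g : ℝ))|
        ≤ C * F g 0 / (g : ℝ) ^ 2)
    (h2 : ∃ C : ℝ, 0 < C ∧ ∃ g0 : ℕ, ∀ g : ℕ, g0 ≤ g →
      |V g 2 - CMZ * F g 2 * (1 + (1 / 12 + 1 / (6 * Real.pi ^ 2)) / (g : ℝ))|
        ≤ C * F g 2 / (g : ℝ) ^ 2)
    (hbound : ∃ a A : ℝ, 0 < a ∧ a ≤ A ∧ ∀ g : ℕ, 2 ≤ g → ∀ n : ℕ, n ≤ 1 →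
      a * F g n ≤ V g n ∧ V g n ≤ A * F g n)
    (E : ℕ → ℝ)
    (hE : ∀ g : ℕ, 4 ≤ g →
      E g = (1 / 2) * V (g - 1) 2 / V g 0 + (1 / 48) * V (g - 1) 1 / V g 0
        + (∑ j ∈ Finset.Icc 2 ((g - 1) / 2), V j 1 * V (g - j) 1) / V g 0
        + (1 / 2) * (if Even g then V (g / 2) 1 else 0) ^ 2 / V g 0) :
    ∃ C : ℝ, 0 < C ∧ ∃ g0 : ℕ, ∀ g : ℕ, g0 ≤ g →
      |(1 / (4 * Real.pi)) * E g - (Real.pi / 12) / (g : ℝ)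
          - (1 / (4 * Real.pi) + Real.pi / 12) / (g : ℝ) ^ 2|
        ≤ C / (g : ℝ) ^ 3 := by
  obtain ⟨C0, -, g0, hC0⟩ := h0
  obtain ⟨C2, -, g2, hC2⟩ := h2
  obtain ⟨a, A, ha, -, hV⟩ := hbound
  have hF (n : ℕ) : ∀ᶠ g in atTop, 0 < F g n :=
    eventually_atTop.2 ⟨1, fun g hg => F_pos hg n⟩
  have hD : ∀ᶠ g in atTop, a * F g 0 ≤ V g 0 :=
    eventually_atTop.2 ⟨2, fun g hg => (hV g hg 0 (Nat.zero_le _)).1⟩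
  have hW (j : ℕ) (hj : 2 ≤ j) : |V j 1| ≤ A * F j 1 := by
    obtain ⟨hlo, hhi⟩ := hV j hj 1 le_rfl
    rwa [abs_of_nonneg ((mul_nonneg ha.le (F_nonneg j 1)).trans hlo)]
  have hmain := half_ratio_sub_isBigO hCMZ.ne'
    (hasExpansion_div_of_abs_sub_le hCMZ.ne' (hF 0) (eventually_atTop.2 ⟨g0, hC0⟩))
    (hasExpansion_div_of_abs_sub_le hCMZ.ne' (hF 2) (eventually_atTop.2 ⟨g2, hC2⟩))
  have htail {N : ℕ → ℝ} (hN : N =O[atTop] fun g : ℕ => F g 0 / (g : ℝ) ^ 3) :=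
    isBigO_div_of_mul_le ha (hF 0) hD hN
  apply exists_pos_abs_le_div_cube_of_isBigO
  refine ((hmain.add <| ((htail (isBigO_pred_of_abs_le_F hW)).const_mul_left (1 / 48)).add <|
    (htail (isBigO_sum_mul_of_abs_le_F hW)).add <|
      (htail (isBigO_even_sq_of_abs_le_F hW)).const_mul_left (1 / 2)).const_mul_left
        (1 / (4 * π))).congr' ?_ EventuallyEq.rfl
  filter_upwards [eventually_ge_atTop 4] with g hg
  rw [hE g hg]
  field_simp
  ring

/-- Main Theorem (analytic content): under the Mirzakhani-Zograf asymptotics (H1) and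
two-sided bounds (H2) for the volumes `V_{g,n}` (`n ∈ {0,1,2}`), the quantity
`E_g = (1/2)V_{g-1,2}/V_{g,0} + (1/48)V_{g-1,1}/V_{g,0}
  + ∑_{j=2}^{⌊(g-1)/2⌋} V_{j,1}V_{g-j,1}/V_{g,0} + (1/2)V_{g/2,1}²/V_{g,0}`
(with `V_{g/2,1} := 0` for odd `g`) satisfies
`(1/(4π)) E_g = (π/12)/g + (1/(4π) + π/12)/g² + O(1/g³)`. -/
theorem stmt_15 (CMZ : ℝ) (hCMZ : 0 < CMZ) (V : ℕ → ℕ → ℝ)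
    (hpos : ∀ g : ℕ, 1 ≤ g → ∀ n : ℕ, n ≤ 2 → 0 < V g n)
    (h0 : ∃ C : ℝ, 0 < C ∧ ∃ g0 : ℕ, ∀ g : ℕ, g0 ≤ g →
      |V g 0 - CMZ * F g 0 * (1 + (7 / 12 - 17 / (6 * Real.pi ^ 2)) / (g : ℝ))|
        ≤ C * F g 0 / (g : ℝ) ^ 2)
    (h1 : ∃ C : ℝ, 0 < C ∧ ∃ g0 : ℕ, ∀ g : ℕ, g0 ≤ g →
      |V g 1 - CMZ * F g 1 * (1 + (1 / 3 - 5 / (6 * Real.pi ^ 2)) / (g : ℝ))|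
        ≤ C * F g 1 / (g : ℝ) ^ 2)
    (h2 : ∃ C : ℝ, 0 < C ∧ ∃ g0 : ℕ, ∀ g : ℕ, g0 ≤ g →
      |V g 2 - CMZ * F g 2 * (1 + (1 / 12 + 1 / (6 * Real.pi ^ 2)) / (g : ℝ))|
        ≤ C * F g 2 / (g : ℝ) ^ 2)
    (hbound : ∃ a A : ℝ, 0 < a ∧ a ≤ A ∧ ∀ g : ℕ, 2 ≤ g → ∀ n : ℕ, n ≤ 1 →
      a * F g n ≤ V g n ∧ V g n ≤ A * F g n)
    (E : ℕ → ℝ)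
    (hE : ∀ g : ℕ, 4 ≤ g →
      E g = (1 / 2) * V (g - 1) 2 / V g 0 + (1 / 48) * V (g - 1) 1 / V g 0
        + (∑ j ∈ Finset.Icc 2 ((g - 1) / 2), V j 1 * V (g - j) 1) / V g 0
        + (1 / 2) * (if Even g then V (g / 2) 1 else 0) ^ 2 / V g 0) :
    ∃ C : ℝ, 0 < C ∧ ∃ g0 : ℕ, ∀ g : ℕ, g0 ≤ g →
      |(1 / (4 * Real.pi)) * E g - (Real.pi / 12) / (g : ℝ)
          - (1 / (4 * Real.pi) + Real.pi / 12) / (g : ℝ) ^ 2|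
        ≤ C / (g : ℝ) ^ 3 :=
  stmt_15_general CMZ hCMZ V h0 h2 hbound E hE
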